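/- arXiv:2305.16303 — 4 statements merged into one kernel-verified Lean document; each statement's English description precedes it below -/
import Mathlib

section
/- On the full 2D grid with a finite set of obstacle cells O, among all monotone down-right paths from s to g avoiding O (if any exists), there is a unique 'uppermost' path p* such that every other monotone down-right path from s to g avoiding O is weakly below p* (i.e., contained in U(p*)). Moreover p* is the path produced by greedily preferring right moves over down moves subject to staying within the set of cells from which g is reachable avoiding O. -/
/-- A down-right step on the 2D integer grid: move right `(1,0)` or down `(0,-1)`. -/
def DRStep (a b : ℤ × ℤ) : Prop := b - a = (1, 0) ∨ b - a = (0, -1)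

/-- A monotone down-right path from `s` to `g` avoiding the obstacle set `O`. -/
def MonoPath (O : Set (ℤ × ℤ)) (s g : ℤ × ℤ) (l : List (ℤ × ℤ)) : Prop :=
  l ≠ [] ∧ l.head? = some s ∧ l.getLast? = some g ∧ l.Chain' DRStep ∧ ∀ c ∈ l, c ∉ O

/-- `LowSet l`: cells on `l` or vertically below some cell of `l`. -/
def LowSet (l : List (ℤ × ℤ)) : Set (ℤ × ℤ) := {c | ∃ y', (c.1, y') ∈ l ∧ c.2 ≤ y'}

namespace Stmt7

def Reach (O : Set (ℤ × ℤ)) (g c : ℤ × ℤ) : Prop := ∃ l, MonoPath O c g l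

lemma drstep_coords {a b : ℤ × ℤ} (h : DRStep a b) :
    (b.1 = a.1 + 1 ∧ b.2 = a.2) ∨ (b.1 = a.1 ∧ b.2 = a.2 - 1) := by
  rcases h with h | h <;> [left; right] <;>
  · have h1 := congrArg Prod.fst h
    have h2 := congrArg Prod.snd h
    simp at h1 h2
    omega

lemma drstep_right (a : ℤ × ℤ) : DRStep a (a + (1, 0)) := Or.inl (by simp)
lemma drstep_down (a : ℤ × ℤ) : DRStep a (a + (0, -1)) := Or.inr (by simp)

lemma drstep_cases {a b : ℤ × ℤ} (h : DRStep a b) : b = a + (1, 0) ∨ b = a + (0, -1) := by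
  rcases h with h | h <;> [left; right] <;>
  · rw [sub_eq_iff_eq_add] at h
    rw [h, add_comm]

lemma mp_shape {O : Set (ℤ × ℤ)} {c g : ℤ × ℤ} {l : List (ℤ × ℤ)}
    (h : MonoPath O c g l) : ∃ t, l = c :: t := by
  rcases l with _ | ⟨a, t⟩
  · exact absurd rfl h.1
  · have := h.2.1
    simp at this
    exact ⟨t, by rw [this]⟩

lemma mp_tail {O : Set (ℤ × ℤ)} {c g b : ℤ × ℤ} {t : List (ℤ × ℤ)}
    (h : MonoPath O c g (c :: b :: t)) : DRStep c b ∧ MonoPath O b g (b :: t) := by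
  obtain ⟨hne, hh, hl, hch, hO⟩ := h
  simp only [List.Chain', List.isChain_cons_cons] at hch
  refine ⟨hch.1, List.cons_ne_nil _ _, rfl, ?_, hch.2, fun d hd => hO d (List.mem_cons_of_mem _ hd)⟩
  rw [← hl, List.getLast?_cons_cons]

section Index

variable {l : List (ℤ × ℤ)}

lemma chain'_getElem {α : Type*} {R : α → α → Prop} {l : List α} (hc : l.Chain' R) {i : ℕ}
    (h : i + 1 < l.length) : R l[i] l[i+1] := by
  have := List.isChain_iff_getElem.mp hc i (by omega)
  simpa [List.get_eq_getElem] using this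

lemma step_get (hc : l.Chain' DRStep) {i : ℕ} (h : i + 1 < l.length) :
    (l[i+1].1 = l[i].1 + 1 ∧ l[i+1].2 = l[i].2) ∨ (l[i+1].1 = l[i].1 ∧ l[i+1].2 = l[i].2 - 1) := by
  have := List.isChain_iff_getElem.mp hc i (by omega)
  exact drstep_coords this

lemma diff_get (hc : l.Chain' DRStep) : ∀ (i : ℕ) (h : i < l.length),
    l[i].1 - l[i].2 = (l[0]'(by omega)).1 - (l[0]'(by omega)).2 + i := by
  intro i
  induction i with
  | zero => intro h; simp
  | succ i ih =>
    intro h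
    have hi : i < l.length := by omega
    have := ih hi
    rcases step_get hc h with ⟨h1, h2⟩ | ⟨h1, h2⟩ <;> rw [h1, h2] <;> push_cast <;> omega

lemma fst_mono (hc : l.Chain' DRStep) : ∀ (i j : ℕ) (hj : j < l.length) (hij : i ≤ j),
    (l[i]'(by omega)).1 ≤ l[j].1 := by
  intro i j
  induction j with
  | zero => intro hj hij; have h0 : i = 0 := by omega
            subst h0; exact le_refl _
  | succ j ih =>
    intro hj hij
    rcases Nat.lt_or_ge i (j+1) with hlt | hge
    · have h1 := ih (by omega) (by omega)
      rcases step_get hc hj with ⟨h2, _⟩ | ⟨h2, _⟩ <;> omega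
    · have : i = j + 1 := by omega
      subst this; exact le_refl _

lemma snd_anti (hc : l.Chain' DRStep) : ∀ (i j : ℕ) (hj : j < l.length) (hij : i ≤ j),
    l[j].2 ≤ (l[i]'(by omega)).2 := by
  intro i j
  induction j with
  | zero => intro hj hij; have h0 : i = 0 := by omega
            subst h0; exact le_refl _
  | succ j ih =>
    intro hj hij
    rcases Nat.lt_or_ge i (j+1) with hlt | hge
    · have h1 := ih (by omega) (by omega)
      rcases step_get hc hj with ⟨_, h2⟩ | ⟨_, h2⟩ <;> omega
    · have : i = j + 1 := by omega
      subst this; exact le_refl _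

lemma ivt (hc : l.Chain' DRStep) : ∀ (j : ℕ) (hj : j < l.length) (i : ℕ) (hij : i ≤ j) (v : ℤ),
    (l[i]'(by omega)).1 ≤ v → v ≤ l[j].1 → ∃ k, i ≤ k ∧ k ≤ j ∧ ∃ hk : k < l.length, l[k].1 = v := by
  intro j
  induction j with
  | zero =>
    intro hj i hij v h1 h2
    have : i = 0 := by omega
    subst this
    exact ⟨0, le_refl _, le_refl _, hj, le_antisymm h1 h2⟩
  | succ j ih =>
    intro hj i hij v h1 h2
    rcases Nat.lt_or_ge i (j+1) with hlt | hge
    · rcases le_or_gt v (l[j]'(by omega)).1 with hv | hv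
      · obtain ⟨k, hk1, hk2, hk3⟩ := ih (by omega) i (by omega) v h1 hv
        exact ⟨k, hk1, by omega, hk3⟩
      · refine ⟨j+1, by omega, le_refl _, hj, ?_⟩
        rcases step_get hc hj with ⟨h3, _⟩ | ⟨h3, _⟩ <;> omega
    · have : i = j + 1 := by omega
      subst this
      exact ⟨j+1, le_refl _, le_refl _, hj, le_antisymm h1 h2⟩

end Index

variable {O : Set (ℤ × ℤ)} {c g s b : ℤ × ℤ} {l : List (ℤ × ℤ)}

lemma mp_get0 (h : MonoPath O c g l) : ∃ h0 : 0 < l.length, l[0] = c := by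
  obtain ⟨t, rfl⟩ := mp_shape h
  exact ⟨by simp, rfl⟩

lemma mp_getLast (h : MonoPath O c g l) :
    ∃ hn : l.length - 1 < l.length, l[l.length - 1] = g := by
  have hne := h.1
  have h1 : l.getLast? = some (l.getLast hne) := List.getLast?_eq_getLast hne
  rw [h.2.2.1] at h1
  have h2 := List.getLast_eq_getElem hne
  have hlen : 0 < l.length := List.length_pos_iff.mpr hne
  exact ⟨by omega, by rw [← h2, ← Option.some_inj.mp h1]⟩

lemma mp_diff (h : MonoPath O c g l) :
    g.1 - g.2 = c.1 - c.2 + (l.length - 1 : ℕ) := by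
  obtain ⟨hn, hg⟩ := mp_getLast h
  obtain ⟨h0, hc0⟩ := mp_get0 h
  have := diff_get h.2.2.2.1 (l.length - 1) hn
  rw [hg, hc0] at this
  omega

lemma mp_fst_le (h : MonoPath O c g l) : c.1 ≤ g.1 := by
  obtain ⟨hn, hg⟩ := mp_getLast h
  obtain ⟨h0, hc0⟩ := mp_get0 h
  have := fst_mono h.2.2.2.1 0 (l.length - 1) hn (by omega)
  rwa [hg, hc0] at this

lemma reach_notin (h : Reach O g c) : c ∉ O := by
  obtain ⟨l, hl⟩ := h
  obtain ⟨t, rfl⟩ := mp_shape hl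
  exact hl.2.2.2.2 c List.mem_cons_self

lemma reach_le (h : Reach O g c) : c.1 - c.2 ≤ g.1 - g.2 := by
  obtain ⟨l, hl⟩ := h
  have := mp_diff hl
  omega

lemma reach_eq (h : Reach O g c) (he : c.1 - c.2 = g.1 - g.2) : c = g := by
  obtain ⟨l, hl⟩ := h
  have hd := mp_diff hl
  have hlen : l.length = 1 := by
    have := List.length_pos_iff.mpr hl.1
    omega
  obtain ⟨a, rfl⟩ : ∃ a, l = [a] := List.length_eq_one_iff.mp hlen
  obtain ⟨h0, hc0⟩ := mp_get0 hl
  obtain ⟨hn, hg⟩ := mp_getLast hl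
  simp at hc0 hg
  rw [← hc0, hg]

lemma reach_step (h : Reach O g c) (hne : c ≠ g) :
    Reach O g (c + (1, 0)) ∨ Reach O g (c + (0, -1)) := by
  obtain ⟨l, hl⟩ := h
  obtain ⟨t, rfl⟩ := mp_shape hl
  rcases t with _ | ⟨b, t'⟩
  · obtain ⟨hn, hg⟩ := mp_getLast hl
    simp at hg
    exact absurd hg hne
  · obtain ⟨hd, hmp⟩ := mp_tail hl
    rcases drstep_cases hd with h1 | h1 <;> [left; right] <;> exact ⟨_, h1 ▸ hmp⟩

open Classical in
noncomputable def greedy (O : Set (ℤ × ℤ)) (g : ℤ × ℤ) : ℕ → ℤ × ℤ → List (ℤ × ℤ)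
  | 0, c => [c]
  | n+1, c => c :: greedy O g n (if Reach O g (c + (1, 0)) then c + (1, 0) else c + (0, -1))

lemma greedy_spec : ∀ (n : ℕ) (c : ℤ × ℤ), Reach O g c → g.1 - g.2 - (c.1 - c.2) = n →
    MonoPath O c g (greedy O g n c) ∧
    (greedy O g n c).Chain' (fun a b => b = a + (0, -1) → ¬ ∃ l, MonoPath O (a + (1, 0)) g l) := by
  intro n
  induction n with
  | zero =>
    intro c hr hm
    have hcg : c = g := reach_eq hr (by omega)
    subst hcg
    exact ⟨⟨by simp [greedy], rfl, rfl, List.isChain_singleton _, by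
      simpa [greedy] using reach_notin hr⟩, List.isChain_singleton _⟩
  | succ n ih =>
    intro c hr hm
    classical
    have hne : c ≠ g := by
      intro h; subst h; omega
    set d := if Reach O g (c + (1, 0)) then c + (1, 0) else c + (0, -1) with hd
    have hrd : Reach O g d := by
      by_cases h : Reach O g (c + (1, 0))
      · rw [hd, if_pos h]; exact h
      · rw [hd, if_neg h]
        rcases reach_step hr hne with h1 | h1
        · exact absurd h1 h
        · exact h1
    have hstep : DRStep c d := by
      by_cases h : Reach O g (c + (1, 0))
      · rw [hd, if_pos h]; exact drstep_right c
      · rw [hd, if_neg h]; exact drstep_down c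
    have hdm : g.1 - g.2 - (d.1 - d.2) = n := by
      by_cases h : Reach O g (c + (1, 0)) <;> simp only [hd, if_pos, if_neg, h, if_true, if_false] <;> simp <;> omega
    obtain ⟨hmp, hch⟩ := ih d hrd hdm
    have hgl : greedy O g (n+1) c = c :: greedy O g n d := by rw [greedy, hd]
    have hhd : (greedy O g n d).head? = some d := hmp.2.1
    constructor
    · refine ⟨by simp [hgl], by simp [hgl], ?_, ?_, ?_⟩
      · rw [hgl, List.getLast?_cons, hmp.2.2.1]
        simp [hmp.1]
      · rw [hgl]; show List.IsChain _ _; rw [List.isChain_cons]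
        exact ⟨fun b hb => by rw [hhd] at hb; exact (Option.some_inj.mp hb) ▸ hstep, hmp.2.2.2.1⟩
      · intro x hx
        rw [hgl] at hx
        rcases List.mem_cons.mp hx with rfl | hx
        · exact reach_notin hr
        · exact hmp.2.2.2.2 x hx
    · rw [hgl]; show List.IsChain _ _; rw [List.isChain_cons]
      refine ⟨fun b hb hbd => ?_, hch⟩
      rw [hhd] at hb
      have hbd' : d = c + (0, -1) := (Option.some_inj.mp hb) ▸ hbd
      by_cases h : Reach O g (c + (1, 0))
      · rw [hd, if_pos h] at hbd'
        exfalso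
        rw [Prod.ext_iff] at hbd'
        simp [Prod.ext_iff] at hbd'
      · exact h

lemma dom {p : List (ℤ × ℤ)} (hp : MonoPath O s g p)
    (hg : p.Chain' (fun a b => b = a + (0, -1) → ¬ ∃ l, MonoPath O (a + (1, 0)) g l)) :
    ∀ (q : List (ℤ × ℤ)) (b : ℤ × ℤ), MonoPath O b g q →
      (∃ y0, (b.1, y0) ∈ p ∧ b.2 ≤ y0) → ∀ c ∈ q, c ∈ LowSet p := by
  classical
  have hcp := hp.2.2.2.1
  intro q
  induction q with
  | nil => exact fun b hq => absurd rfl hq.1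
  | cons a t ih =>
    intro b hq hb c hc
    obtain ⟨t', ht'⟩ := mp_shape hq
    injection ht' with h1 h2
    subst h1; subst h2
    rename' a => b
    rcases List.mem_cons.mp hc with rfl | hct
    · exact hb
    · rcases t with _ | ⟨b2, t2⟩
      · simp at hct
      · obtain ⟨hd, htail⟩ := mp_tail hq
        rcases drstep_cases hd with hb2 | hb2
        · -- right move: b2 = b + (1,0)
          obtain ⟨y0, hm0, hle0⟩ := hb
          obtain ⟨i0, hi0, hEq0⟩ := List.mem_iff_getElem.mp hm0
          obtain ⟨hnp, hgp⟩ := mp_getLast hp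
          have hb2g : b2.1 ≤ g.1 := mp_fst_le htail
          have hb21 : b2.1 = b.1 + 1 := by rw [hb2]; simp
          have hb22 : b2.2 = b.2 := by rw [hb2]; simp
          have hx0 : (p[i0]).1 = b.1 := by rw [hEq0]
          have hy0 : (p[i0]).2 = y0 := by rw [hEq0]
          have hi0le : i0 ≤ p.length - 1 := by omega
          have hglast : (p[p.length - 1]'hnp).1 = g.1 := by rw [hgp]
          obtain ⟨k0, hk01, hk02, hk03, hk04⟩ :=
            ivt hcp (p.length - 1) hnp i0 hi0le (b.1 + 1) (by omega) (by omega)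
          have hPex : ∃ k, ∃ hk : k < p.length, (p[k]).1 = b.1 + 1 := ⟨k0, hk03, hk04⟩
          obtain ⟨k, hkspec, hmin⟩ : ∃ k, (∃ hk : k < p.length, (p[k]).1 = b.1 + 1) ∧
              ∀ m, m < k → ¬ ∃ hm : m < p.length, (p[m]).1 = b.1 + 1 :=
            ⟨Nat.find hPex, Nat.find_spec hPex, fun m hm => Nat.find_min hPex hm⟩
          obtain ⟨hk, hkx⟩ := hkspec
          by_cases hcase : b.2 ≤ (p[k]).2
          · refine ih b2 htail ⟨(p[k]).2, ?_, by omega⟩ c hct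
            have : p[k] = (b.1 + 1, (p[k]).2) := Prod.ext hkx rfl
            rw [hb21, ← this]
            exact List.getElem_mem _
          · exfalso
            push_neg at hcase
            -- k ≥ 1
            have h0p : 0 < p.length := by omega
            have hx0le : (p[0]'h0p).1 ≤ b.1 := by
              have := fst_mono hcp 0 i0 hi0 (by omega)
              omega
            have hk1 : 1 ≤ k := by
              rcases Nat.eq_zero_or_pos k with h | h
              · subst h; omega
              · exact h
            have hkm1 : k - 1 + 1 = k := by omega
            have hstep := step_get hcp (i := k - 1) (by omega)
            simp only [hkm1] at hstep
            have hprev : (p[k-1]'(by omega)).1 = b.1 ∧ (p[k-1]'(by omega)).2 = (p[k]).2 := by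
              rcases hstep with ⟨hs1, hs2⟩ | ⟨hs1, hs2⟩
              · constructor <;> omega
              · exfalso
                exact hmin (k-1) (by omega) ⟨by omega, by omega⟩
            -- index arithmetic
            have hD0 := diff_get hcp i0 hi0
            have hDk1 := diff_get hcp (k-1) (by omega)
            obtain ⟨j, hjZ⟩ : ∃ j : ℕ, (j : ℤ) = i0 + (y0 - b.2) :=
              ⟨(i0 + (y0 - b.2)).toNat, by omega⟩
            have hdi0 : b.1 - y0 = (p[0]'h0p).1 - (p[0]'h0p).2 + i0 := by
              rw [← hx0, ← hy0]; exact hD0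
            have hdk1 : b.1 - (p[k]).2 = (p[0]'h0p).1 - (p[0]'h0p).2 + ((k-1 : ℕ) : ℤ) := by
              rw [← hprev.1, ← hprev.2]; exact hDk1
            have hjk : j + 1 ≤ k - 1 := by omega
            have hjlen : j + 1 < p.length := by omega
            have hi0j : i0 ≤ j := by omega
            have hxj : (p[j]'(by omega)).1 = b.1 := by
              have h1 := fst_mono hcp i0 j (by omega) hi0j
              have h2 := fst_mono hcp j (k-1) (by omega) (by omega)
              omega
            have hxj1 : (p[j+1]'hjlen).1 = b.1 := by
              have h1 := fst_mono hcp i0 (j+1) hjlen (by omega)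
              have h2 := fst_mono hcp (j+1) (k-1) (by omega) hjk
              omega
            have hDj := diff_get hcp j (by omega)
            have hDj1 := diff_get hcp (j+1) hjlen
            have hyj : (p[j]'(by omega)).2 = b.2 := by omega
            have hyj1 : (p[j+1]'hjlen).2 = b.2 - 1 := by omega
            have hpj : p[j]'(by omega) = b := Prod.ext hxj hyj
            have hpj1 : p[j+1]'hjlen = b + (0, -1) := by
              refine Prod.ext ?_ ?_
              · rw [hxj1]; simp
              · rw [hyj1]; simp; ring
            have hgc := chain'_getElem hg hjlen
            refine hgc (by rw [hpj1, hpj]) ?_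
            rw [hpj]
            exact ⟨b2 :: t2, hb2 ▸ htail⟩
        · -- down move: b2 = b + (0,-1)
          obtain ⟨y0, hm0, hle0⟩ := hb
          refine ih b2 htail ⟨y0, ?_, ?_⟩ c hct
          · have : b2.1 = b.1 := by rw [hb2]; simp
            rw [this]; exact hm0
          · have : b2.2 = b.2 - 1 := by rw [hb2]; simp; ring
            omega

lemma fst_le_of_low {p q : List (ℤ × ℤ)} (hp : MonoPath O s g p) (hq : MonoPath O s g q)
    (h1 : ∀ c ∈ q, c ∈ LowSet p) (i : ℕ) (hiq : i < q.length) (hip : i < p.length) :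
    q[i].1 ≤ p[i].1 := by
  obtain ⟨y', hm, hle⟩ := h1 q[i] (List.getElem_mem _)
  obtain ⟨m, hm', hEq⟩ := List.mem_iff_getElem.mp hm
  obtain ⟨hq0, hq0e⟩ := mp_get0 hq
  obtain ⟨hp0, hp0e⟩ := mp_get0 hp
  have hdq := diff_get hq.2.2.2.1 i hiq
  have hdpm := diff_get hp.2.2.2.1 m hm'
  rw [hq0e] at hdq
  rw [hp0e] at hdpm
  have hx : (p[m]).1 = (q[i]).1 := by rw [hEq]
  have hy : (p[m]).2 = y' := by rw [hEq]
  have hmi : m ≤ i := by omega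
  have := fst_mono hp.2.2.2.1 m i hip hmi
  omega

lemma eq_of_mutual {p q : List (ℤ × ℤ)} (hp : MonoPath O s g p) (hq : MonoPath O s g q)
    (h1 : ∀ c ∈ q, c ∈ LowSet p) (h2 : ∀ c ∈ p, c ∈ LowSet q) : q = p := by
  have hlp : 0 < p.length := List.length_pos_iff.mpr hp.1
  have hlq : 0 < q.length := List.length_pos_iff.mpr hq.1
  have hdp := mp_diff hp
  have hdq := mp_diff hq
  have hlen : q.length = p.length := by omega
  apply List.ext_getElem hlen
  intro i hiq hip
  have e1 := fst_le_of_low hp hq h1 i hiq hip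
  have e2 := fst_le_of_low hq hp h2 i hip hiq
  have hx : q[i].1 = p[i].1 := le_antisymm e1 e2
  obtain ⟨hq0, hq0e⟩ := mp_get0 hq
  obtain ⟨hp0, hp0e⟩ := mp_get0 hp
  have d1 := diff_get hq.2.2.2.1 i hiq
  have d2 := diff_get hp.2.2.2.1 i hip
  rw [hq0e] at d1
  rw [hp0e] at d2
  exact Prod.ext hx (by omega)

end Stmt7

open Stmt7 in
/-- Among all monotone down-right paths from `s` to `g` avoiding a finite obstacle
set `O` (if any exists), there is a unique uppermost path `p*`: every other such
path is weakly below `p*`, and `p*` is greedy, i.e., it only moves down when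
moving right would leave the set of cells from which `g` is still reachable
avoiding `O`. -/
theorem stmt7 (O : Set (ℤ × ℤ)) (hO : O.Finite) (s g : ℤ × ℤ)
    (hex : ∃ l, MonoPath O s g l) :
    ∃! p : List (ℤ × ℤ), MonoPath O s g p ∧
      (∀ q, MonoPath O s g q → ∀ c ∈ q, c ∈ LowSet p) ∧
      p.Chain' (fun a b => b = a + (0, -1) → ¬ ∃ l, MonoPath O (a + (1, 0)) g l) := by
  classical
  have hrs : Reach O g s := hex
  have hle := reach_le hrs
  obtain ⟨hmp, hch⟩ := greedy_spec ((g.1 - g.2) - (s.1 - s.2)).toNat s hrs (by omega)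
  have hdom : ∀ q, MonoPath O s g q → ∀ c ∈ q, c ∈ LowSet (greedy O g ((g.1 - g.2) - (s.1 - s.2)).toNat s) := by
    intro q hq c hcq
    refine dom hmp hch q s hq ⟨s.2, ?_, le_refl _⟩ c hcq
    obtain ⟨h0, h0e⟩ := mp_get0 hmp
    have : (s.1, s.2) = s := rfl
    rw [this]
    exact List.mem_iff_getElem.mpr ⟨0, h0, h0e⟩
  refine ⟨greedy O g ((g.1 - g.2) - (s.1 - s.2)).toNat s, ⟨hmp, hdom, hch⟩, ?_⟩
  rintro q ⟨hqmp, hqdom, hqch⟩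
  exact eq_of_mutual hmp hqmp (hdom q hqmp) (hqdom _ hmp)
end

section
/- Suppose a corridor (simple path in the graph) has length L, a 'positive' agent enters it from one end at some time t₁ ≤ L and a 'negative' agent enters it from the other end at some time t₂ ≤ L, and both agents must traverse the entire corridor without waiting (moving one edge per step in opposite directions). Then the two agents have an edge conflict or vertex conflict inside the corridor. -/
/-- Two agents traversing a corridor `v_0, …, v_L` without waiting from opposite
ends, agent 1 occupying index `t - t₁` for `t ∈ [t₁, t₁ + L]` and agent 2
occupying index `L - (t - t₂)` for `t ∈ [t₂, t₂ + L]`, with entry times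
`0 ≤ t₁, t₂ ≤ L`, must have a vertex conflict or an edge conflict inside the
corridor. -/
theorem stmt10 (L t₁ t₂ : ℤ) (hL : 0 ≤ L)
    (h1 : 0 ≤ t₁) (h1' : t₁ ≤ L) (h2 : 0 ≤ t₂) (h2' : t₂ ≤ L) :
    (∃ t, t₁ ≤ t ∧ t ≤ t₁ + L ∧ t₂ ≤ t ∧ t ≤ t₂ + L ∧
      t - t₁ = L - (t - t₂)) ∨
    (∃ t, t₁ ≤ t ∧ t + 1 ≤ t₁ + L ∧ t₂ ≤ t ∧ t + 1 ≤ t₂ + L ∧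
      L - (t - t₂) = (t - t₁) + 1) := by
  rcases Int.even_or_odd (L + t₁ + t₂) with ⟨k, hk⟩ | ⟨k, hk⟩
  · left; exact ⟨k, by omega, by omega, by omega, by omega, by omega⟩
  · right; exact ⟨k, by omega, by omega, by omega, by omega, by omega⟩
end

section
/- In a graph G, suppose every individually optimal timed path of agent i (a shortest, never-waiting path from s_i to g_i) passes through at least one vertex from a designated finite set S_i of 'channel' vertices, and for each channel vertex v the set of agents that can reach v within L steps along shortest paths partitions into two classes that would require traversing the channel in opposite directions. Then in any individually optimal solution, each channel is traversed by agents of only one class. (Special case: two agents needing to traverse a common path of length L from opposite ends, each entering within L steps, must conflict; hence cannot both appear in an individually optimal solution.) -/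
/-- An individually optimal timed path: a shortest, never-waiting path from `s`
to `g` of duration `T` in the graph `G`. -/
def IndOptPath {V : Type*} (G : SimpleGraph V) (s gl : V) (T : ℕ) (p : ℕ → V) : Prop :=
  p 0 = s ∧ p T = gl ∧ (∀ t < T, G.Adj (p t) (p (t + 1))) ∧ T = G.dist s gl

/-- Special case of the channel-contention argument: `G` contains a corridor
`v 0, …, v L`; every individually optimal path of agent `A` enters the corridor
at `v 0` at some time `≤ L` and traverses it to `v L` without waiting, while
every individually optimal path of agent `B` enters at `v L` at some time `≤ L`
and traverses it to `v 0`. Then any pair of individually optimal paths for `A`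
and `B` has a vertex or edge conflict, so no conflict-free individually optimal
solution contains both. -/
theorem stmt18 {V : Type*} (G : SimpleGraph V) (L : ℕ) (v : ℕ → V)
    (hcorr : ∀ k < L, G.Adj (v k) (v (k + 1)))
    (sA gA sB gB : V)
    (hA : ∀ (T : ℕ) (p : ℕ → V), IndOptPath G sA gA T p →
      ∃ tA ≤ L, tA + L ≤ T ∧ ∀ k ≤ L, p (tA + k) = v k)
    (hB : ∀ (T : ℕ) (p : ℕ → V), IndOptPath G sB gB T p →
      ∃ tB ≤ L, tB + L ≤ T ∧ ∀ k ≤ L, p (tB + k) = v (L - k)) :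
    ∀ (TA TB : ℕ) (pA pB : ℕ → V),
      IndOptPath G sA gA TA pA → IndOptPath G sB gB TB pB →
      ∃ t, (t ≤ TA ∧ t ≤ TB ∧ pA t = pB t) ∨
        (t + 1 ≤ TA ∧ t + 1 ≤ TB ∧ pA (t + 1) = pB t ∧ pB (t + 1) = pA t) := by
  intro TA TB pA pB hAopt hBopt
  obtain ⟨tA, htA, htAL, hpA⟩ := hA TA pA hAopt
  obtain ⟨tB, htB, htBL, hpB⟩ := hB TB pB hBopt
  rcases Nat.even_or_odd (tB + L - tA) with ⟨k, hk⟩ | ⟨k, hk⟩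
  · -- vertex conflict at time tA + k
    have hk' : tA + (k + k) = tB + L := by omega
    have hkL : k ≤ L := by omega
    refine ⟨tA + k, Or.inl ⟨by omega, by omega, ?_⟩⟩
    have h1 : pA (tA + k) = v k := hpA k hkL
    have h2 : pB (tA + k) = v k := by
      have ht : tA + k = tB + (L - k) := by omega
      rw [ht, hpB (L - k) (by omega)]
      congr 1; omega
    rw [h1, h2]
  · -- edge conflict between times tA + k and tA + k + 1
    have hk' : tA + (2 * k + 1) = tB + L := by omega
    have hkL : k + 1 ≤ L := by omega
    refine ⟨tA + k, Or.inr ⟨by omega, by omega, ?_, ?_⟩⟩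
    · have h1 : pA (tA + k + 1) = v (k + 1) := hpA (k + 1) hkL
      have h2 : pB (tA + k) = v (k + 1) := by
        have ht : tA + k = tB + (L - (k + 1)) := by omega
        rw [ht, hpB (L - (k + 1)) (by omega)]
        congr 1; omega
      rw [h1, h2]
    · have h1 : pA (tA + k) = v k := hpA k (by omega)
      have h2 : pB (tA + k + 1) = v k := by
        have ht : tA + k + 1 = tB + (L - k) := by omega
        rw [ht, hpB (L - k) (by omega)]
        congr 1; omega
      rw [h1, h2]
end

section
/- Fix a monotone down-right timed path q (no waits) and a cell c on q reached by q at time t_q. Any monotone down-right timed path p that starts on a diagonal with strictly smaller d-value (d(x,y) = x - y) reaches c, if at all, at time t_p with t_p > t_q; therefore treating only the final cell (goal) of q as a permanent obstacle for p suffices: p conflicts with q if and only if p visits q's goal at a time at least the time q arrives there. -/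
lemma drstep_d {a b : ℤ × ℤ} (h : DRStep a b) : b.1 - b.2 = a.1 - a.2 + 1 := by
  rcases h with h | h <;>
  · have h1 : b.1 - a.1 = (Prod.fst (b - a)) := rfl
    have h2 : b.2 - a.2 = (Prod.snd (b - a)) := rfl
    rw [h] at h1 h2
    simp at h1 h2
    omega

/-- Let `q` be a monotone down-right timed path that stops forever at its goal
`q Tq` after time `Tq`, and `p` a monotone down-right timed path starting on a
diagonal with strictly smaller `d`-value (`d(x,y) = x - y`). Then `p` reaches any
cell of `q`'s moving portion strictly later than `q`, any conflict between `p`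
and `q` occurs at `q`'s goal at a time `≥ Tq`, and conversely `p` conflicts with
`q` iff `p` visits `q`'s goal at some time `≥ Tq`. -/
theorem stmt19 (p q : ℕ → ℤ × ℤ) (Tq : ℕ)
    (hp : ∀ t, DRStep (p t) (p (t + 1)))
    (hq : ∀ t < Tq, DRStep (q t) (q (t + 1)))
    (hstop : ∀ t, Tq ≤ t → q t = q Tq)
    (hdiag : (p 0).1 - (p 0).2 < (q 0).1 - (q 0).2) :
    (∀ t₁ t₂, t₂ ≤ Tq → p t₁ = q t₂ → t₂ < t₁) ∧
    (∀ t, p t = q t → Tq ≤ t ∧ p t = q Tq) ∧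
    ((∃ t, p t = q t) ↔ ∃ t, Tq ≤ t ∧ p t = q Tq) := by
  have hpd : ∀ t : ℕ, (p t).1 - (p t).2 = (p 0).1 - (p 0).2 + t := by
    intro t
    induction t with
    | zero => simp
    | succ n ih =>
      have := drstep_d (hp n)
      push_cast
      omega
  have hqd : ∀ t : ℕ, t ≤ Tq → (q t).1 - (q t).2 = (q 0).1 - (q 0).2 + t := by
    intro t ht
    induction t with
    | zero => simp
    | succ n ih =>
      have := drstep_d (hq n (by omega))
      have := ih (by omega)
      push_cast
      omega
  have main : ∀ t₁ t₂, t₂ ≤ Tq → p t₁ = q t₂ → t₂ < t₁ := by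
    intro t₁ t₂ ht₂ heq
    have h1 := hpd t₁
    have h2 := hqd t₂ ht₂
    rw [heq] at h1
    omega
  refine ⟨main, ?_, ?_⟩
  · intro t heq
    have hTq : Tq ≤ t := by
      by_contra h
      exact absurd (main t t (by omega) heq) (lt_irrefl t)
    exact ⟨hTq, heq.trans (hstop t hTq)⟩
  · constructor
    · rintro ⟨t, heq⟩
      have hTq : Tq ≤ t := by
        by_contra h
        exact absurd (main t t (by omega) heq) (lt_irrefl t)
      exact ⟨t, hTq, heq.trans (hstop t hTq)⟩
    · rintro ⟨t, hTq, heq⟩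
      exact ⟨t, heq.trans (hstop t hTq).symm⟩
end
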